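/- Let ∗ be a finite character star-operation on a domain D and let A be a P-∗-almost super-homogeneous ideal. If B = (b_1, …, b_s) is a P-∗-homogeneous ideal of D, then there exists a positive integer n such that either (A^n + (b_1^n, …, b_s^n))_∗ = (A^n)_∗ or (A^n + (b_1^n, …, b_s^n))_∗ = (b_1^n, …, b_s^n)_∗. -/

import Mathlib

open FractionalIdeal

variable (D : Type*) (K : Type*) [CommRing D] [IsDomain D] [Field K] [Algebra D K]
  [IsFractionRing D K]

/-- A finite character star-operation on the integral domain `D`, acting on the
nonzero fractional ideals of `D` inside its quotient field `K`. -/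
structure StarOperation where
  star : FractionalIdeal (nonZeroDivisors D) K → FractionalIdeal (nonZeroDivisors D) K
  star_principal : ∀ x : K, x ≠ 0 →
    star (spanSingleton (nonZeroDivisors D) x) = spanSingleton (nonZeroDivisors D) x
  star_smul : ∀ (x : K) (A : FractionalIdeal (nonZeroDivisors D) K), x ≠ 0 → A ≠ 0 →
    star (spanSingleton (nonZeroDivisors D) x * A) = spanSingleton (nonZeroDivisors D) x * star A
  le_star : ∀ A, A ≠ 0 → A ≤ star A
  star_mono : ∀ A B, A ≠ 0 → B ≠ 0 → A ≤ B → star A ≤ star B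
  star_star : ∀ A, A ≠ 0 → star (star A) = star A
  finite_character : ∀ A, A ≠ 0 → ∀ x ∈ star A,
    ∃ B : FractionalIdeal (nonZeroDivisors D) K,
      B ≠ 0 ∧ B ≤ A ∧ (B : Submodule D K).FG ∧ x ∈ star B

/-- A prime ideal of height one: a nonzero prime with no nonzero prime strictly below it. -/
def HeightOnePrime (P : Ideal D) : Prop :=
  P.IsPrime ∧ P ≠ ⊥ ∧ ∀ Q : Ideal D, Q.IsPrime → Q < P → Q = ⊥

/-- Membership of `x : K` in the localization `D_P` viewed inside `K`. -/
def MemLocAt (P : Ideal D) (x : K) : Prop :=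
  ∃ a t : D, t ∉ P ∧ x * algebraMap D K t = algebraMap D K a

/-- An almost valuation ring: for nonzero `a, b` some power `a^n` divides `b^n` or
conversely. -/
def AVRing (R : Type*) [CommRing R] : Prop :=
  ∀ a b : R, a ≠ 0 → b ≠ 0 → ∃ n : ℕ, 0 < n ∧ (a ^ n ∣ b ^ n ∨ b ^ n ∣ a ^ n)

/-- The `v`-operation `A ↦ (A⁻¹)⁻¹` on fractional ideals. -/
noncomputable def vOp (A : FractionalIdeal (nonZeroDivisors D) K) : FractionalIdeal (nonZeroDivisors D) K :=
  (A⁻¹)⁻¹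

/-- An integral ideal is a `t`-ideal if it contains `B_v` for every nonzero finitely
generated subideal `B`. -/
def IsTIdeal (I : Ideal D) : Prop :=
  ∀ B : Ideal D, B ≠ ⊥ → B.FG → B ≤ I →
    vOp D K (B : FractionalIdeal (nonZeroDivisors D) K) ≤ (I : FractionalIdeal (nonZeroDivisors D) K)

/-- Maximal `t`-ideals. -/
def IsTMax (P : Ideal D) : Prop :=
  P ≠ ⊥ ∧ P ≠ ⊤ ∧ IsTIdeal D K P ∧
    ∀ J : Ideal D, J ≠ ⊤ → IsTIdeal D K J → P ≤ J → J = P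

/-- An integral ideal is a `w`-ideal if it contains every `x ∈ K` with `xJ ⊆ I` for
some finitely generated ideal `J` with `J⁻¹ = D`. -/
def IsWIdeal (I : Ideal D) : Prop :=
  ∀ x : K, (∃ J : Ideal D, J.FG ∧ ((J : FractionalIdeal (nonZeroDivisors D) K))⁻¹ = 1 ∧
      spanSingleton (nonZeroDivisors D) x * (J : FractionalIdeal (nonZeroDivisors D) K) ≤
        (I : FractionalIdeal (nonZeroDivisors D) K)) →
    x ∈ (I : FractionalIdeal (nonZeroDivisors D) K)

/-- Maximal `w`-ideals. -/
def IsWMax (P : Ideal D) : Prop :=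
  P ≠ ⊥ ∧ P ≠ ⊤ ∧ IsWIdeal D K P ∧
    ∀ J : Ideal D, J ≠ ⊤ → IsWIdeal D K J → P ≤ J → J = P

/-- `P ∈ Ass(K/D)`: `P` is a prime minimal over a conductor ideal `(aD : bD)`. -/
def InAssKD (P : Ideal D) : Prop :=
  P.IsPrime ∧ ∃ a b : D, a ≠ 0 ∧ b ≠ 0 ∧
    (Ideal.span {a}).colon (Ideal.span {b}) ≤ P ∧
    ∀ Q : Ideal D, Q.IsPrime → (Ideal.span {a}).colon (Ideal.span {b}) ≤ Q → Q ≤ P → Q = P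

/-- An AGCD (almost GCD) domain: for all nonzero `a, b` there is `n ≥ 1` with
`(aⁿ, bⁿ)_v` principal. -/
def IsAGCDDomain : Prop :=
  ∀ a b : D, a ≠ 0 → b ≠ 0 → ∃ n : ℕ, 0 < n ∧ ∃ d : D,
    vOp D K ((Ideal.span {a ^ n, b ^ n} : Ideal D) : FractionalIdeal (nonZeroDivisors D) K) =
      spanSingleton (nonZeroDivisors D) (algebraMap D K d)

/-- `D_P` is an almost valuation domain, for `P` a prime of `D`. -/
def AVAtPrime {D : Type*} [CommRing D] (P : Ideal D) (hP : P.IsPrime) : Prop :=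
  AVRing (Localization (@Ideal.primeCompl D _ P hP))

namespace StarOperation

variable {D K}
variable (s : StarOperation D K)

/-- The star closure of an integral ideal, as an integral ideal. -/
def starI (I : Ideal D) : Ideal D :=
  (s.star (I : FractionalIdeal (nonZeroDivisors D) K) : Submodule D K).comap
    (Algebra.linearMap D K)

/-- An integral `∗`-ideal. -/
def IsStarIdeal (I : Ideal D) : Prop :=
  s.star (I : FractionalIdeal (nonZeroDivisors D) K) = (I : FractionalIdeal (nonZeroDivisors D) K)

/-- A maximal `∗`-ideal: maximal among proper integral `∗`-ideals (such ideals are prime). -/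
def IsMaxStarIdeal (P : Ideal D) : Prop :=
  P ≠ ⊥ ∧ P ≠ ⊤ ∧ P.IsPrime ∧ s.IsStarIdeal P ∧
    ∀ J : Ideal D, J ≠ ⊤ → s.IsStarIdeal J → P ≤ J → J = P

/-- `∗`-invertibility of a fractional ideal. -/
def IsStarInvertible (A : FractionalIdeal (nonZeroDivisors D) K) : Prop :=
  s.star (A * A⁻¹) = 1

/-- `∗`-invertibility of an integral ideal. -/
def IsStarInvertibleI (I : Ideal D) : Prop :=
  s.IsStarInvertible (I : FractionalIdeal (nonZeroDivisors D) K)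

/-- A `P`-`∗`-homogeneous ideal: nonzero, finitely generated, contained in the maximal
`∗`-ideal `P` and in no other maximal `∗`-ideal. -/
def IsHomogeneous (P I : Ideal D) : Prop :=
  I ≠ ⊥ ∧ I.FG ∧ s.IsMaxStarIdeal P ∧ I ≤ P ∧
    ∀ Q : Ideal D, s.IsMaxStarIdeal Q → I ≤ Q → Q = P

/-- A type 1 `∗`-homogeneous ideal: `M(A) = √(A_∗)`. -/
def IsType1 (P I : Ideal D) : Prop := P = (s.starI I).radical

/-- A type 2 `∗`-homogeneous ideal: `A_∗ = (M(A)ⁿ)_∗` for some `n ≥ 1`. -/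
def IsType2 (P I : Ideal D) : Prop :=
  ∃ n : ℕ, 0 < n ∧
    s.star (I : FractionalIdeal (nonZeroDivisors D) K) =
      s.star ((P ^ n : Ideal D) : FractionalIdeal (nonZeroDivisors D) K)

/-- A `P`-`∗`-almost super-homogeneous ideal. -/
def IsAlmostSuperHomogeneous (P I : Ideal D) : Prop :=
  s.IsStarInvertibleI I ∧ s.IsHomogeneous P I ∧
    ∀ (k : ℕ) (b : Fin k → D), (∀ i, b i ∈ P) →
      (∃ r : ℕ, 0 < r ∧ ((I ^ r : Ideal D) : FractionalIdeal (nonZeroDivisors D) K) ≤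
        s.star ((Ideal.span (Set.range b) : Ideal D) : FractionalIdeal (nonZeroDivisors D) K)) →
      ∃ n : ℕ, 0 < n ∧ s.IsStarInvertibleI (Ideal.span (Set.range fun i => b i ^ n))

/-- A `∗`-super-homogeneous ideal: every `∗`-homogeneous ideal containing it is
`∗`-invertible. -/
def IsSuperHomogeneous (P I : Ideal D) : Prop :=
  s.IsHomogeneous P I ∧
    ∀ B Q : Ideal D, s.IsHomogeneous Q B → I ≤ B → s.IsStarInvertibleI B

/-- A `P`-`∗`-afg-homogeneous (almost factorial general homogeneous) ideal. -/
def IsAfgHomogeneous (P I : Ideal D) : Prop :=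
  s.IsStarInvertibleI I ∧ s.IsHomogeneous P I ∧
    ∀ (k : ℕ) (b : Fin k → D), (∀ i, b i ∈ P) →
      (∃ r : ℕ, 0 < r ∧ ((I ^ r : Ideal D) : FractionalIdeal (nonZeroDivisors D) K) ≤
        s.star ((Ideal.span (Set.range b) : Ideal D) : FractionalIdeal (nonZeroDivisors D) K)) →
      ∃ n : ℕ, 0 < n ∧ ∃ d : D,
        s.star ((Ideal.span (Set.range fun i => b i ^ n) : Ideal D) :
            FractionalIdeal (nonZeroDivisors D) K) =
          spanSingleton (nonZeroDivisors D) (algebraMap D K d)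

/-- A `∗`-af-homogeneous ideal: every `∗`-homogeneous ideal containing it has a power
whose `∗`-closure is principal. -/
def IsAfHomogeneous (P I : Ideal D) : Prop :=
  s.IsHomogeneous P I ∧
    ∀ B Q : Ideal D, s.IsHomogeneous Q B → I ≤ B →
      ∃ n : ℕ, 0 < n ∧ ∃ d : D,
        s.star ((B ^ n : Ideal D) : FractionalIdeal (nonZeroDivisors D) K) =
          spanSingleton (nonZeroDivisors D) (algebraMap D K d)

/-- `D` is a `∗`-SH domain with respect to a property of ideals: every nonzero proper
principal ideal is a `∗`-product of ideals with the given property. -/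
def IsSHWith (prop : Ideal D → Prop) : Prop :=
  ∀ x : D, x ≠ 0 → ¬IsUnit x →
    ∃ (k : ℕ) (A : Fin k → Ideal D), (∀ i, prop (A i)) ∧
      s.star ((∏ i, A i : Ideal D) : FractionalIdeal (nonZeroDivisors D) K) =
        ((Ideal.span {x} : Ideal D) : FractionalIdeal (nonZeroDivisors D) K)

/-- A `∗`-almost super-SH domain. -/
def IsAlmostSuperSH : Prop :=
  s.IsSHWith fun I => ∃ P, s.IsAlmostSuperHomogeneous P I

/-- Finite character: every nonzero nonunit lies in only finitely many maximal
`∗`-ideals. -/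
def FiniteCharacterDom : Prop :=
  ∀ x : D, x ≠ 0 → ¬IsUnit x → {P : Ideal D | s.IsMaxStarIdeal P ∧ x ∈ P}.Finite

/-- Independence: no two distinct maximal `∗`-ideals contain a common nonzero prime. -/
def IndependentDom : Prop :=
  ∀ P Q : Ideal D, s.IsMaxStarIdeal P → s.IsMaxStarIdeal Q → P ≠ Q →
    ∀ L : Ideal D, L.IsPrime → L ≠ ⊥ → ¬(L ≤ P ∧ L ≤ Q)

/-- A `∗`-h-local domain. -/
def IsHLocal : Prop := s.FiniteCharacterDom ∧ s.IndependentDom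

/-- A `∗`-almost independent ring of Krull type. -/
def IsAlmostIRKT : Prop :=
  s.IsHLocal ∧ ∀ (P : Ideal D) (h : s.IsMaxStarIdeal P), AVAtPrime P h.2.2.1

/-- A `∗`-almost generalized Krull domain. -/
def IsAGKD : Prop :=
  (∀ x : K, (∀ P : Ideal D, HeightOnePrime D P → MemLocAt D K P x) →
      ∃ d : D, algebraMap D K d = x) ∧
  (∀ x : D, x ≠ 0 → ¬IsUnit x → {P : Ideal D | HeightOnePrime D P ∧ x ∈ P}.Finite) ∧
  (∀ P : Ideal D, s.IsMaxStarIdeal P ↔ HeightOnePrime D P) ∧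
  (∀ (P : Ideal D) (h : s.IsMaxStarIdeal P), AVAtPrime P h.2.2.1)

/-- A `∗`-Krull domain: `∗`-h-local, `∗-Max(D) = X⁽¹⁾(D)`, and `D_P` is a DVR for each
maximal `∗`-ideal `P`. -/
def IsStarKrull : Prop :=
  s.IsHLocal ∧ (∀ P : Ideal D, s.IsMaxStarIdeal P ↔ HeightOnePrime D P) ∧
    ∀ (P : Ideal D) (h : s.IsMaxStarIdeal P),
      @IsDiscreteValuationRing (Localization (@Ideal.primeCompl D _ P h.2.2.1)) _
        (IsLocalization.isDomain_localization (@Ideal.primeCompl_le_nonZeroDivisors D _ _ P h.2.2.1))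

/-- A `∗`-almost Bézout domain. -/
def IsAlmostBezout : Prop :=
  ∀ a b : D, a ≠ 0 → b ≠ 0 → ∃ n : ℕ, 0 < n ∧ ∃ d : D,
    s.star ((Ideal.span {a ^ n, b ^ n} : Ideal D) : FractionalIdeal (nonZeroDivisors D) K) =
      spanSingleton (nonZeroDivisors D) (algebraMap D K d)

/-- The `∗`-class group `Cl_∗(D)` is torsion: every `∗`-invertible fractional ideal has a
power whose `∗`-closure is principal. -/
def HasTorsionClassGroup : Prop :=
  ∀ A : FractionalIdeal (nonZeroDivisors D) K, A ≠ 0 → s.IsStarInvertible A →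
    ∃ n : ℕ, 0 < n ∧ ∃ x : K, s.star (A ^ n) = spanSingleton (nonZeroDivisors D) x

end StarOperation

variable {D : Type*} {K : Type*} [CommRing D] [IsDomain D] [Field K] [Algebra D K]
  [IsFractionRing D K]

open StarOperation

/-!
Write `I = (a₁, …, a_t)`. The ideal `C = (a₁, …, a_t, b₁, …, b_s) ⊆ P` contains `I`, so
almost super-homogeneity gives `n` with `Cₙ = (a_iⁿ, b_jⁿ)` ∗-invertible. The ideals
`Aₙ = (a_iⁿ)` and `Bₙ = (b_jⁿ)` are again `P`-∗-homogeneous, and `(Aₙ Cₙ⁻¹ + Bₙ Cₙ⁻¹)_∗ = D`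
with both summands integral. If neither summand had ∗-closure `D`, both would lie in the unique
maximal ∗-ideal `P` containing `Aₙ` and `Bₙ`, hence so would their sum; so one of them, say
`Aₙ Cₙ⁻¹`, has ∗-closure `D`, and multiplying by `Cₙ` gives `(Cₙ)_∗ = (Aₙ)_∗`. Finally
`(Iⁿ)_∗ = (Aₙ)_∗`: by pigeonhole `I^(m+n) ⊆ Aₙ I^m` for large `m`, and `I^m` cancels after
applying `∗` because `I` is ∗-invertible.
-/

open scoped nonZeroDivisors

theorem Fin.range_append {α : Type*} {m n : ℕ} (a : Fin m → α) (b : Fin n → α) :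
    Set.range (Fin.append a b) = Set.range a ∪ Set.range b := by
  ext x
  constructor
  · rintro ⟨i, rfl⟩
    induction i using Fin.addCases <;> simp
  · rintro (⟨i, rfl⟩ | ⟨i, rfl⟩)
    exacts [⟨_, Fin.append_left a b i⟩, ⟨_, Fin.append_right a b i⟩]

theorem Ideal.span_range_append {R : Type*} [CommSemiring R] {m k : ℕ} (a : Fin m → R)
    (b : Fin k → R) :
    Ideal.span (Set.range (Fin.append a b)) =
      Ideal.span (Set.range a) ⊔ Ideal.span (Set.range b) := by
  rw [Fin.range_append, Ideal.span_union]

theorem Ideal.span_range_pow_append {R : Type*} [CommSemiring R] {m k : ℕ} (a : Fin m → R)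
    (b : Fin k → R) (n : ℕ) :
    Ideal.span (Set.range fun i => Fin.append a b i ^ n) =
      Ideal.span (Set.range fun i => a i ^ n) ⊔ Ideal.span (Set.range fun i => b i ^ n) := by
  rw [← Ideal.span_range_append]
  congr 2
  ext i
  refine Fin.addCases (fun j => ?_) (fun j => ?_) i <;> simp

theorem Ideal.span_range_pow_ne_bot {R : Type*} [CommSemiring R] [NoZeroDivisors R] {ι : Type*}
    {a : ι → R} (h : Ideal.span (Set.range a) ≠ ⊥) {n : ℕ} (hn : n ≠ 0) :
    Ideal.span (Set.range fun i => a i ^ n) ≠ ⊥ := by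
  simpa [Ideal.span_eq_bot, hn] using h

theorem Ideal.IsPrime.span_range_pow_le_iff {R : Type*} [CommSemiring R] {Q : Ideal R}
    (hQ : Q.IsPrime) {ι : Type*} (a : ι → R) {n : ℕ} (hn : 0 < n) :
    Ideal.span (Set.range fun i => a i ^ n) ≤ Q ↔ Ideal.span (Set.range a) ≤ Q := by
  simp [Ideal.span_le, Set.range_subset_iff, hQ.pow_mem_iff_mem n hn]

theorem Ideal.colon_span_singleton_mul_sup_le {R : Type*} [CommSemiring R] (I : Ideal R) (x : R) :
    I.colon (Ideal.span {x}) * (I ⊔ Ideal.span {x}) ≤ I := by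
  rw [Ideal.mul_sup]
  refine sup_le Ideal.mul_le_right (Ideal.mul_le.2 fun r hr y hy => ?_)
  obtain ⟨c, rfl⟩ := Ideal.mem_span_singleton'.1 hy
  rw [mul_left_comm]
  exact I.mul_mem_left c (Ideal.mem_colon_span_singleton.1 hr)

theorem Ideal.sup_pow_add_le {R : Type*} [CommSemiring R] (I J : Ideal R) (p q : ℕ) :
    (I ⊔ J) ^ (p + q) ≤ I ^ p * (I ⊔ J) ^ q ⊔ J ^ q * (I ⊔ J) ^ p := by
  conv_lhs => rw [← Ideal.add_eq_sup, add_pow, Ideal.sum_eq_sup]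
  refine Finset.sup_le fun i hi => Ideal.mul_le_left.trans ?_
  have hi : i ≤ p + q := Nat.lt_succ_iff.1 (Finset.mem_range.1 hi)
  rcases le_or_gt p i with h | h
  · obtain ⟨j, rfl⟩ := Nat.exists_eq_add_of_le h
    calc I ^ (p + j) * J ^ (p + q - (p + j)) = I ^ p * (I ^ j * J ^ (q - j)) := by
          rw [pow_add, Nat.add_sub_add_left, mul_assoc]
      _ ≤ I ^ p * (I ⊔ J) ^ q := by
          refine Ideal.mul_mono_right ?_
          rw [← Nat.add_sub_of_le (by omega : j ≤ q), pow_add, Nat.add_sub_cancel_left]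
          exact Ideal.mul_mono (Ideal.pow_right_mono le_sup_left _)
            (Ideal.pow_right_mono le_sup_right _)
      _ ≤ _ := le_sup_left
  · calc I ^ i * J ^ (p + q - i) = J ^ q * (I ^ i * J ^ (p - i)) := by
          rw [show p + q - i = q + (p - i) by omega, pow_add]; ring
      _ ≤ J ^ q * (I ⊔ J) ^ p := by
          refine Ideal.mul_mono_right ?_
          rw [← Nat.add_sub_of_le h.le, pow_add, Nat.add_sub_cancel_left]
          exact Ideal.mul_mono (Ideal.pow_right_mono le_sup_left _)
            (Ideal.pow_right_mono le_sup_right _)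
      _ ≤ _ := le_sup_right

/-- Pigeonhole: for `m` large, every monomial of degree `m + n` in the elements of `S` is
divisible by `xⁿ` for some `x ∈ S`. -/
theorem Ideal.exists_span_pow_add_le {R : Type*} [CommSemiring R] {S : Set R} (hS : S.Finite)
    {n : ℕ} (hn : 0 < n) :
    ∃ m, Ideal.span S ^ (m + n) ≤ Ideal.span ((· ^ n) '' S) * Ideal.span S ^ m := by
  induction S, hS using Set.Finite.induction_on with
  | empty => exact ⟨0, by simp [Ideal.bot_pow hn.ne']⟩
  | @insert x S _ _ ih =>
    obtain ⟨m, hm⟩ := ih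
    refine ⟨m + n, ?_⟩
    rw [Set.image_insert_eq, Ideal.span_insert, Ideal.span_insert, add_comm _ n]
    set L := Ideal.span {x} ⊔ Ideal.span S
    set Ln := Ideal.span {x ^ n} ⊔ Ideal.span ((· ^ n) '' S)
    refine (Ideal.sup_pow_add_le _ _ n (m + n)).trans (sup_le ?_ ?_)
    · rw [Ideal.span_singleton_pow]
      exact Ideal.mul_mono le_sup_left le_rfl
    · calc Ideal.span S ^ (m + n) * L ^ n
          ≤ Ideal.span ((· ^ n) '' S) * Ideal.span S ^ m * L ^ n := Ideal.mul_mono_left hm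
        _ ≤ Ln * L ^ m * L ^ n :=
          Ideal.mul_mono_left (Ideal.mul_mono le_sup_right (Ideal.pow_right_mono le_sup_right _))
        _ = Ln * L ^ (m + n) := by rw [pow_add, mul_assoc]

theorem Submodule.exists_le_of_fg_le_sSup {R M : Type*} [Semiring R] [AddCommMonoid M] [Module R M]
    {B : Submodule R M} (hB : B.FG) {C : Set (Submodule R M)} (hC : C.Nonempty)
    (hdir : DirectedOn (· ≤ ·) C) (h : B ≤ sSup C) : ∃ J ∈ C, B ≤ J :=
  (CompleteLattice.isCompactElement_iff_le_of_directed_sSup_le (α := Submodule R M) B).1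
    ((Submodule.fg_iff_compact B).1 hB) C hC hdir h

instance FractionalIdeal.instNoZeroDivisors {R P : Type*} [CommRing R] [CommRing P] [Algebra R P]
    [NoZeroDivisors P] {S : Submonoid R} : NoZeroDivisors (FractionalIdeal S P) :=
  Function.Injective.noZeroDivisors _ coeToSubmodule_injective coe_zero coe_mul

namespace FractionalIdeal

theorem exists_le_coeIdeal_of_le_sSup {R P : Type*} [CommRing R] [CommRing P] [Algebra R P]
    {S : Submonoid R} {B : FractionalIdeal S P} (hB : (B : Submodule R P).FG)
    {C : Set (Ideal R)} (hC : C.Nonempty) (hdir : DirectedOn (· ≤ ·) C)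
    (h : B ≤ ((sSup C : Ideal R) : FractionalIdeal S P)) :
    ∃ J ∈ C, B ≤ (J : FractionalIdeal S P) := by
  rw [← coe_le_coe, coe_coeIdeal, IsLocalization.coeSubmodule] at h
  rw [(Submodule.gc_map_comap (Algebra.linearMap R P)).l_sSup, ← sSup_image] at h
  obtain ⟨_, ⟨J, hJ, rfl⟩, hBJ⟩ := Submodule.exists_le_of_fg_le_sSup hB (hC.image _)
    (hdir.mono_comp fun _ _ h => Submodule.map_mono h) h
  exact ⟨J, hJ, hBJ⟩

variable {D K : Type*} [CommRing D] [IsDomain D] [Field K] [Algebra D K] [IsFractionRing D K]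

theorem inv_ne_zero_of_ne_zero {I : FractionalIdeal D⁰ K} (hI : I ≠ 0) : I⁻¹ ≠ 0 := by
  obtain ⟨a, ha, hint⟩ := I.isFractional
  have hmem : algebraMap D K a ∈ I⁻¹ := (mem_inv_iff hI).2 fun y hy => by
    obtain ⟨r, hr⟩ := hint y hy
    exact (mem_one_iff _).2 ⟨r, by rw [hr, Algebra.smul_def]⟩
  intro h
  rw [h, mem_zero_iff, IsFractionRing.to_map_eq_zero_iff] at hmem
  exact nonZeroDivisors.ne_zero ha hmem

theorem one_le_coeIdeal_inv {I : Ideal D} (hI : I ≠ ⊥) : 1 ≤ (I : FractionalIdeal D⁰ K)⁻¹ :=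
  one_le.2 <| (mem_inv_iff (coeIdeal_ne_zero.2 hI)).2 fun y hy => by
    simpa using coeIdeal_le_one hy

end FractionalIdeal

namespace StarOperation

variable {D K : Type*} [CommRing D] [Field K] [Algebra D K] [IsFractionRing D K]
  (s : StarOperation D K) {X Y : FractionalIdeal D⁰ K}

theorem star_ne_zero (hX : X ≠ 0) : s.star X ≠ 0 :=
  ne_bot_of_le_ne_bot hX (s.le_star X hX)

theorem star_one : s.star 1 = 1 := by
  simpa using s.star_principal 1 one_ne_zero

theorem star_ne_one_of_le_isMaxStarIdeal {P : Ideal D} (hP : s.IsMaxStarIdeal P) (hX : X ≠ 0)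
    (hXP : X ≤ P) : s.star X ≠ 1 := by
  intro h
  have h1P : 1 ≤ (P : FractionalIdeal D⁰ K) :=
    calc 1 = s.star X := h.symm
      _ ≤ s.star P := s.star_mono _ _ hX (coeIdeal_ne_zero.2 hP.1) hXP
      _ = P := hP.2.2.2.1
  exact hP.2.1 ((coeIdeal_eq_one.1 (le_antisymm coeIdeal_le_one h1P)).trans Ideal.one_eq_top)

theorem star_le_one (hX : X ≠ 0) (h : X ≤ 1) : s.star X ≤ 1 :=
  s.star_one ▸ s.star_mono X 1 hX one_ne_zero h

theorem star_le_star_of_le_star (hX : X ≠ 0) (hY : Y ≠ 0) (h : X ≤ s.star Y) :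
    s.star X ≤ s.star Y :=
  s.star_star Y hY ▸ s.star_mono X _ hX (s.star_ne_zero hY) h

theorem star_mul_star (hX : X ≠ 0) (hY : Y ≠ 0) : s.star (X * s.star Y) = s.star (X * Y) := by
  refine le_antisymm (s.star_le_star_of_le_star (mul_ne_zero hX (s.star_ne_zero hY))
    (mul_ne_zero hX hY) (mul_le.2 fun x hx y hy => ?_))
    (s.star_mono _ _ (mul_ne_zero hX hY) (mul_ne_zero hX (s.star_ne_zero hY))
      (mul_le_mul' le_rfl (s.le_star Y hY)))
  -- `x Y_∗ = (x Y)_∗ ⊆ (X Y)_∗` for each `x ∈ X`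
  rcases eq_or_ne x 0 with rfl | hx0
  · rw [zero_mul]
    exact zero_mem _
  have hxs : spanSingleton D⁰ x ≠ 0 := spanSingleton_ne_zero_iff.2 hx0
  have hmem : x * y ∈ s.star (spanSingleton D⁰ x * Y) := by
    rw [s.star_smul x Y hx0 hY]
    exact mul_mem_mul (mem_spanSingleton_self _ x) hy
  exact s.star_mono _ _ (mul_ne_zero hxs hY) (mul_ne_zero hX hY)
    (mul_le_mul' (spanSingleton_le_iff_mem.2 hx) le_rfl) hmem

theorem star_star_mul (hX : X ≠ 0) (hY : Y ≠ 0) : s.star (s.star X * Y) = s.star (X * Y) := by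
  rw [mul_comm, s.star_mul_star hY hX, mul_comm]

theorem star_star_add (hX : X ≠ 0) : s.star (s.star X + Y) = s.star (X + Y) := by
  have hXY : X + Y ≠ 0 := ne_bot_of_le_ne_bot hX le_sup_left
  have hsXY : s.star X + Y ≠ 0 := ne_bot_of_le_ne_bot (s.star_ne_zero hX) le_sup_left
  refine le_antisymm (s.star_le_star_of_le_star hsXY hXY (sup_le ?_ ?_))
    (s.star_mono _ _ hXY hsXY (add_le_add (s.le_star X hX) le_rfl))
  · exact s.star_mono _ _ hX hXY le_sup_left
  · exact le_sup_right.trans (s.le_star _ hXY)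

theorem star_mul_pow_of_star_eq_one {W : FractionalIdeal D⁰ K} (hX : X ≠ 0) (hW : W ≠ 0)
    (h : s.star W = 1) (m : ℕ) : s.star (X * W ^ m) = s.star X := by
  induction m with
  | zero => rw [pow_zero, mul_one]
  | succ m ih =>
    rw [pow_succ, ← mul_assoc, ← s.star_mul_star (mul_ne_zero hX (pow_ne_zero m hW)) hW, h,
      mul_one, ih]

variable [IsDomain D]

theorem star_pow_eq_of_pow_add_le_mul (hX : X ≠ 0) (hXinv : s.IsStarInvertible X) {m n : ℕ}
    (hYX : Y ≤ X ^ n) (h : X ^ (m + n) ≤ Y * X ^ m) : s.star (X ^ n) = s.star Y := by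
  have hXi : X⁻¹ ≠ 0 := inv_ne_zero_of_ne_zero hX
  have hW : X * X⁻¹ ≠ 0 := mul_ne_zero hX hXi
  have hY : Y ≠ 0 := by
    rintro rfl
    exact pow_ne_zero _ hX (le_bot_iff.1 (h.trans (zero_mul _).le))
  refine le_antisymm ?_ (s.star_mono _ _ hY (pow_ne_zero n hX) hYX)
  calc s.star (X ^ n) = s.star (X ^ (m + n) * X⁻¹ ^ m) := by
        rw [← s.star_mul_pow_of_star_eq_one (pow_ne_zero n hX) hW hXinv m]
        ring_nf
    _ ≤ s.star (Y * X ^ m * X⁻¹ ^ m) :=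
        s.star_mono _ _ (mul_ne_zero (pow_ne_zero _ hX) (pow_ne_zero _ hXi))
          (mul_ne_zero (mul_ne_zero hY (pow_ne_zero _ hX)) (pow_ne_zero _ hXi))
          (mul_le_mul' h le_rfl)
    _ = s.star Y := by
        rw [mul_assoc, ← mul_pow, s.star_mul_pow_of_star_eq_one hY hW hXinv m]

theorem star_eq_of_star_mul_inv_eq_one (hX : X ≠ 0) (hY : Y ≠ 0) (hYinv : s.IsStarInvertible Y)
    (h : s.star (X * Y⁻¹) = 1) : s.star Y = s.star X :=
  calc s.star Y = s.star (s.star (X * Y⁻¹) * Y) := by rw [h, one_mul]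
    _ = s.star (X * (Y * Y⁻¹)) := by
        rw [s.star_star_mul (mul_ne_zero hX (inv_ne_zero_of_ne_zero hY)) hY]
        ring_nf
    _ = s.star X := by
        rw [← s.star_mul_star hX (mul_ne_zero hY (inv_ne_zero_of_ne_zero hY)), hYinv, mul_one]

/-- The ideals `J` with `J_∗ = D` form an Oka family, because `(J : x)(J + xD) ⊆ J`. -/
theorem isOka_star_eq_one : Ideal.IsOka fun J : Ideal D => J ≠ ⊥ → s.star ↑J = 1 where
  top _ := by rw [coeIdeal_top, s.star_one]
  oka {J x} hsup hcolon hJ := by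
    have hsup0 : J ⊔ Ideal.span {x} ≠ ⊥ := ne_bot_of_le_ne_bot hJ le_sup_left
    have hcolon0 : J.colon (Ideal.span {x}) ≠ ⊥ := ne_bot_of_le_ne_bot hJ Ideal.le_colon
    have hprod : s.star ↑(J.colon (Ideal.span {x}) * (J ⊔ Ideal.span {x})) = 1 := by
      rw [coeIdeal_mul, ← s.star_mul_star (coeIdeal_ne_zero.2 hcolon0) (coeIdeal_ne_zero.2 hsup0),
        hsup hsup0, mul_one, hcolon hcolon0]
    refine le_antisymm (s.star_le_one (coeIdeal_ne_zero.2 hJ) coeIdeal_le_one) ?_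
    rw [← hprod]
    exact s.star_mono _ _
      (coeIdeal_ne_zero.2 fun h0 => (Ideal.mul_eq_bot.1 h0).elim hcolon0 hsup0)
      (coeIdeal_ne_zero.2 hJ) ((coeIdeal_le_coeIdeal K).2 (J.colon_span_singleton_mul_sup_le x))

theorem isMaxStarIdeal_of_maximal {Q : Ideal D}
    (hQ : Maximal (fun J : Ideal D => ¬(J ≠ ⊥ → s.star ↑J = 1)) Q) : s.IsMaxStarIdeal Q := by
  obtain ⟨hQ0, hQ1⟩ := Classical.not_imp.1 hQ.prop
  have hQ0' : (Q : FractionalIdeal D⁰ K) ≠ 0 := coeIdeal_ne_zero.2 hQ0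
  have hstar : s.IsStarIdeal Q := by
    obtain ⟨J, hJ⟩ := le_one_iff_exists_coeIdeal.1 (s.star_le_one hQ0' coeIdeal_le_one)
    have hQJ : Q ≤ J := (coeIdeal_le_coeIdeal K).1 (hJ ▸ s.le_star _ hQ0')
    have hJQ : J ≤ Q :=
      hQ.2 (not_imp_of_and_not ⟨ne_bot_of_le_ne_bot hQ0 hQJ, by rwa [hJ, s.star_star _ hQ0']⟩) hQJ
    rw [IsStarIdeal, ← hJ, le_antisymm hJQ hQJ]
  refine ⟨hQ0, ?_, s.isOka_star_eq_one.isPrime_of_maximal_not hQ, hstar, fun J hJ hJs hQJ =>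
    le_antisymm (hQ.2 (not_imp_of_and_not ⟨ne_bot_of_le_ne_bot hQ0 hQJ, ?_⟩) hQJ) hQJ⟩
  · rintro rfl
    exact hQ1 (by rw [coeIdeal_top, s.star_one])
  · rw [hJs, coeIdeal_eq_one, Ideal.one_eq_top]
    exact hJ

/-- By finite character, `(sSup C)_∗ = D` for a chain `C` would already give `J_∗ = D` for some
`J ∈ C`, so Zorn's lemma applies. -/
theorem exists_isMaxStarIdeal_le {J : Ideal D} (hJ : J ≠ ⊥) (h : s.star ↑J ≠ 1) :
    ∃ Q, s.IsMaxStarIdeal Q ∧ J ≤ Q := by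
  have hchain : ∀ C ⊆ {J : Ideal D | ¬(J ≠ ⊥ → s.star ↑J = 1)}, IsChain (· ≤ ·) C →
      ∀ J ∈ C, ¬(sSup C ≠ ⊥ → s.star ↑(sSup C) = 1) := by
    intro C hC hchain J hJC hsup
    have hsup0 : sSup C ≠ ⊥ := ne_bot_of_le_ne_bot (Classical.not_imp.1 (hC hJC)).1 (le_sSup hJC)
    have h1 : (1 : K) ∈ s.star ↑(sSup C) := hsup hsup0 ▸ one_mem_one _
    obtain ⟨B, hB0, hBC, hBfg, h1B⟩ := s.finite_character _ (coeIdeal_ne_zero.2 hsup0) 1 h1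
    obtain ⟨J', hJ'C, hBJ'⟩ := exists_le_coeIdeal_of_le_sSup hBfg ⟨J, hJC⟩ hchain.directedOn hBC
    refine hC hJ'C fun hJ'0 => le_antisymm (s.star_le_one (coeIdeal_ne_zero.2 hJ'0) coeIdeal_le_one)
      (one_le.2 (s.star_mono _ _ hB0 (coeIdeal_ne_zero.2 hJ'0) hBJ' h1B))
  obtain ⟨Q, hJQ, hQ⟩ := zorn_le_nonempty₀ _
    (fun C hC hC' J hJC => ⟨sSup C, hchain C hC hC' J hJC, fun _ => le_sSup⟩) J
    (not_imp_of_and_not ⟨hJ, h⟩)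
  exact ⟨Q, s.isMaxStarIdeal_of_maximal hQ, hJQ⟩

theorem IsHomogeneous.le_of_star_ne_one {s : StarOperation D K} {P A : Ideal D}
    (hA : s.IsHomogeneous P A) (hX1 : X ≤ 1) (hAX : ↑A ≤ X) (hX : s.star X ≠ 1) : X ≤ P := by
  obtain ⟨J, rfl⟩ := le_one_iff_exists_coeIdeal.1 hX1
  have hAJ : A ≤ J := (coeIdeal_le_coeIdeal K).1 hAX
  obtain ⟨Q, hQ, hJQ⟩ := s.exists_isMaxStarIdeal_le (ne_bot_of_le_ne_bot hA.1 hAJ) hX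
  rw [← hA.2.2.2.2 Q hQ (hAJ.trans hJQ)]
  exact (coeIdeal_le_coeIdeal K).2 hJQ

theorem IsHomogeneous.span_range_pow {s : StarOperation D K} {P : Ideal D} {ι : Type*}
    [Finite ι] {a : ι → D} (ha : s.IsHomogeneous P (Ideal.span (Set.range a))) {n : ℕ}
    (hn : 0 < n) : s.IsHomogeneous P (Ideal.span (Set.range fun i => a i ^ n)) :=
  ⟨Ideal.span_range_pow_ne_bot ha.1 hn.ne', Submodule.fg_span (Set.finite_range _), ha.2.2.1,
    (ha.2.2.1.2.2.1.span_range_pow_le_iff a hn).2 ha.2.2.2.1,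
    fun Q hQ hQa => ha.2.2.2.2 Q hQ ((hQ.2.2.1.span_range_pow_le_iff a hn).1 hQa)⟩

/-- With `X = (A + B)⁻¹`, the ideals `AX` and `BX` are integral and sum to `(A + B)X`, whose
`∗`-closure is `D`; if neither had `∗`-closure `D`, both would lie in `P`. -/
theorem star_sup_eq_or_of_isHomogeneous {P A B : Ideal D} (hA : s.IsHomogeneous P A)
    (hB : s.IsHomogeneous P B) (hAB : s.IsStarInvertibleI (A ⊔ B)) :
    s.star ↑(A ⊔ B) = s.star ↑A ∨ s.star ↑(A ⊔ B) = s.star ↑B := by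
  have hAB0 : A ⊔ B ≠ ⊥ := ne_bot_of_le_ne_bot hA.1 le_sup_left
  have hAB0' : ((A ⊔ B : Ideal D) : FractionalIdeal D⁰ K) ≠ 0 := coeIdeal_ne_zero.2 hAB0
  set X := ((A ⊔ B : Ideal D) : FractionalIdeal D⁰ K)⁻¹
  have hX : 1 ≤ X := one_le_coeIdeal_inv hAB0
  have hle : ∀ {I : Ideal D}, I ≤ A ⊔ B → ↑I ≤ ↑I * X ∧ ↑I * X ≤ 1 := fun hI =>
    ⟨by simpa using mul_le_mul' le_rfl hX,
      (mul_le_mul' ((coeIdeal_le_coeIdeal K).2 hI) le_rfl).trans mul_one_div_le_one⟩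
  have key : s.star (↑A * X) = 1 ∨ s.star (↑B * X) = 1 := by
    by_contra! h
    have hP := sup_le (hA.le_of_star_ne_one (hle le_sup_left).2 (hle le_sup_left).1 h.1)
      (hB.le_of_star_ne_one (hle le_sup_right).2 (hle le_sup_right).1 h.2)
    rw [sup_eq_add, ← add_mul, ← coeIdeal_sup] at hP
    exact s.star_ne_one_of_le_isMaxStarIdeal hA.2.2.1
      (mul_ne_zero hAB0' (inv_ne_zero_of_ne_zero hAB0')) hP hAB
  exact key.imp (s.star_eq_of_star_mul_inv_eq_one (coeIdeal_ne_zero.2 hA.1) hAB0' hAB)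
    (s.star_eq_of_star_mul_inv_eq_one (coeIdeal_ne_zero.2 hB.1) hAB0' hAB)

theorem star_span_range_pow {ι : Type*} [Finite ι] {a : ι → D}
    (ha : Ideal.span (Set.range a) ≠ ⊥) (hinv : s.IsStarInvertibleI (Ideal.span (Set.range a)))
    {n : ℕ} (hn : 0 < n) :
    s.star ↑(Ideal.span (Set.range a) ^ n) = s.star ↑(Ideal.span (Set.range fun i => a i ^ n)) := by
  obtain ⟨m, hm⟩ := Ideal.exists_span_pow_add_le (Set.finite_range a) hn
  rw [← Set.range_comp (fun x : D => x ^ n) a] at hm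
  rw [coeIdeal_pow]
  refine s.star_pow_eq_of_pow_add_le_mul (coeIdeal_ne_zero.2 ha) hinv (m := m) ?_ ?_
  · rw [← coeIdeal_pow, coeIdeal_le_coeIdeal, Ideal.span_le, Set.range_subset_iff]
    exact fun i => Ideal.pow_mem_pow (Ideal.subset_span (Set.mem_range_self i)) n
  · rw [← coeIdeal_pow, ← coeIdeal_pow, ← coeIdeal_mul, coeIdeal_le_coeIdeal]
    exact hm

end StarOperation

theorem stmt2 (s : StarOperation D K) (P I : Ideal D)
    (hI : s.IsAlmostSuperHomogeneous P I) {k : ℕ} (b : Fin k → D)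
    (hb : s.IsHomogeneous P (Ideal.span (Set.range b))) :
    ∃ n : ℕ, 0 < n ∧
      (s.star ((I ^ n + Ideal.span (Set.range fun i => b i ^ n) : Ideal D) : FractionalIdeal (nonZeroDivisors D) K) =
          s.star ((I ^ n : Ideal D) : FractionalIdeal (nonZeroDivisors D) K) ∨
        s.star ((I ^ n + Ideal.span (Set.range fun i => b i ^ n) : Ideal D) : FractionalIdeal (nonZeroDivisors D) K) =
          s.star ((Ideal.span (Set.range fun i => b i ^ n) : Ideal D) : FractionalIdeal (nonZeroDivisors D) K)) := by
  obtain ⟨hIinv, hIhom, hIsuper⟩ := hI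
  obtain ⟨t, a, rfl⟩ : ∃ t, ∃ a : Fin t → D, Ideal.span (Set.range a) = I :=
    Submodule.fg_iff_exists_fin_generating_family.1 hIhom.2.1
  have hspan := Ideal.span_range_append a b
  have hsupP : Ideal.span (Set.range (Fin.append a b)) ≤ P :=
    hspan ▸ sup_le hIhom.2.2.2.1 hb.2.2.2.1
  have hIC : (Ideal.span (Set.range a) : FractionalIdeal D⁰ K) ≤
      s.star ↑(Ideal.span (Set.range (Fin.append a b))) := by
    rw [hspan]
    exact ((coeIdeal_le_coeIdeal K).2 le_sup_left).trans
      (s.le_star _ (coeIdeal_ne_zero.2 (ne_bot_of_le_ne_bot hIhom.1 le_sup_left)))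
  obtain ⟨n, hn, hinv⟩ := hIsuper _ (Fin.append a b)
    (fun i => hsupP (Ideal.subset_span (Set.mem_range_self i))) ⟨1, one_pos, by rwa [pow_one]⟩
  rw [Ideal.span_range_pow_append] at hinv
  have hpow := s.star_span_range_pow hIhom.1 hIinv hn
  have hAn := hIhom.span_range_pow hn
  refine ⟨n, hn, ?_⟩
  rw [Ideal.add_eq_sup, coeIdeal_sup,
    ← s.star_star_add (coeIdeal_ne_zero.2 (pow_ne_zero n hIhom.1)), hpow,
    s.star_star_add (coeIdeal_ne_zero.2 hAn.1), ← coeIdeal_sup]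
  exact s.star_sup_eq_or_of_isHomogeneous hAn (hb.span_range_pow hn) hinv
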